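/- arXiv:1409.8168 — 11 statements merged into one kernel-verified Lean document; each statement's English description precedes it below -/
import Mathlib

section
/- Let D be a nonempty open connected subset of the real quaternions ℍ and let f : ℍ → ℍ. Suppose that for every q ∈ D the limit of (f(q+h) − f(q))·h⁻¹ as h → 0 (h ≠ 0, q + h ∈ D) exists in ℍ. Then there exist constants ω, λ ∈ ℍ such that f(q) = ω·q + λ for all q ∈ D. -/
open Quaternion Filter Topology Asymptotics

noncomputable section

/-- The imaginary unit `i` of the real quaternions. -/
def qI : ℍ[ℝ] := ⟨0, 1, 0, 0⟩
/-- The imaginary unit `j` of the real quaternions. -/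
def qJ : ℍ[ℝ] := ⟨0, 0, 1, 0⟩
/-- The imaginary unit `k` of the real quaternions. -/
def qK : ℍ[ℝ] := ⟨0, 0, 0, 1⟩

/-- Quaternion rotation `p ↦ μ p μ⁻¹`. -/
def qRot (μ p : ℍ[ℝ]) : ℍ[ℝ] := μ * p * μ⁻¹

/-- The left GHR derivative `∂f/∂q^μ` at `q`. -/
def lD (f : ℍ[ℝ] → ℍ[ℝ]) (μ q : ℍ[ℝ]) : ℍ[ℝ] :=
  (4 : ℍ[ℝ])⁻¹ * (fderiv ℝ f q 1 - fderiv ℝ f q qI * qRot μ qI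
    - fderiv ℝ f q qJ * qRot μ qJ - fderiv ℝ f q qK * qRot μ qK)

/-- The left conjugate GHR derivative `∂f/∂q^{μ*}` at `q`. -/
def lDc (f : ℍ[ℝ] → ℍ[ℝ]) (μ q : ℍ[ℝ]) : ℍ[ℝ] :=
  (4 : ℍ[ℝ])⁻¹ * (fderiv ℝ f q 1 + fderiv ℝ f q qI * qRot μ qI
    + fderiv ℝ f q qJ * qRot μ qJ + fderiv ℝ f q qK * qRot μ qK)

/-- The right GHR derivative `∂ᵣf/∂q^μ` at `q`. -/
def rD (f : ℍ[ℝ] → ℍ[ℝ]) (μ q : ℍ[ℝ]) : ℍ[ℝ] :=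
  (4 : ℍ[ℝ])⁻¹ * (fderiv ℝ f q 1 - qRot μ qI * fderiv ℝ f q qI
    - qRot μ qJ * fderiv ℝ f q qJ - qRot μ qK * fderiv ℝ f q qK)

/-- The right conjugate GHR derivative `∂ᵣf/∂q^{μ*}` at `q`. -/
def rDc (f : ℍ[ℝ] → ℍ[ℝ]) (μ q : ℍ[ℝ]) : ℍ[ℝ] :=
  (4 : ℍ[ℝ])⁻¹ * (fderiv ℝ f q 1 + qRot μ qI * fderiv ℝ f q qI
    + qRot μ qJ * fderiv ℝ f q qJ + qRot μ qK * fderiv ℝ f q qK)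

/-!
A convergent left difference quotient makes `f` real differentiable at `q` with derivative
`h ↦ L q * h`. For `c` with `c * c = -1`, right multiplication by `c` is a complex structure on
`ℍ`, and along every complex line `z ↦ q + a * (z.re + z.im • c)` the function `f` is holomorphic
for it, with complex derivative `L · * a`. So `L · * a` is holomorphic as well, which relates the
directional derivatives of `L` along `a` and `a * c`. Taking `a = 1` with `c = i, j, k` and
`a = j` with `c = k` forces `∂₁L(q) * k = -∂₁L(q) * k`; hence all partial derivatives of `L`
vanish, `L` is a constant `ω` on the connected set `D`, and `f - ω * ·` has derivative zero.
-/

open Metric Set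

theorem hasFDerivAt_mul_of_tendsto_quotient {A : Type*} [NormedDivisionRing A] [NormedAlgebra ℝ A]
    {f : A → A} {D : Set A} {q L : A} (hD : D ∈ 𝓝 q)
    (h : Tendsto (fun h : A => (f (q + h) - f q) * h⁻¹) (𝓝[{h : A | h ≠ 0 ∧ q + h ∈ D}] 0) (𝓝 L)) :
    HasFDerivAt f (ContinuousLinearMap.mul ℝ A L) q := by
  have hD0 : {h : A | q + h ∈ D} ∈ 𝓝 0 :=
    (continuous_const_add q).continuousAt.preimage_mem_nhds (by simpa using hD)
  have hfilter : 𝓝[{h : A | h ≠ 0 ∧ q + h ∈ D}] 0 = 𝓝[≠] 0 := by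
    rw [show {h : A | h ≠ 0 ∧ q + h ∈ D} = {0}ᶜ ∩ {h | q + h ∈ D} from rfl]
    exact nhdsWithin_inter_of_mem' (mem_nhdsWithin_of_mem_nhds hD0)
  rw [hfilter] at h
  rw [hasFDerivAt_iff_isLittleO_nhds_zero, isLittleO_iff]
  intro ε hε
  have hclose : ∀ᶠ h in 𝓝[≠] 0, ‖(f (q + h) - f q) * h⁻¹ - L‖ ≤ ε := by
    filter_upwards [h (closedBall_mem_nhds L hε)] with x hx
    simpa [dist_eq_norm] using hx
  filter_upwards [eventually_nhdsWithin_iff.1 hclose] with x hx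
  rcases eq_or_ne x 0 with rfl | hx0
  · simp
  · have key : f (q + x) - f q - L * x = ((f (q + x) - f q) * x⁻¹ - L) * x := by
      rw [sub_mul, mul_assoc, inv_mul_cancel₀ hx0, mul_one]
    simpa [key, norm_mul] using mul_le_mul_of_nonneg_right (hx hx0) (norm_nonneg x)

section ComplexPair

variable {c : ℍ[ℝ]} (hc : c * c = -1) (d : ℍ[ℝ])

def complexPairMap : ℂ × ℂ →ₗ[ℝ] ℍ[ℝ] :=
  (Complex.liftAux c hc).toLinearMap ∘ₗ LinearMap.fst ℝ ℂ ℂ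
    + LinearMap.mulLeft ℝ d ∘ₗ (Complex.liftAux c hc).toLinearMap ∘ₗ LinearMap.snd ℝ ℂ ℂ

theorem complexPairMap_apply (y : ℂ × ℂ) :
    complexPairMap hc d y = Complex.liftAux c hc y.1 + d * Complex.liftAux c hc y.2 :=
  rfl

theorem complexPairMap_smul (w : ℂ) (y : ℂ × ℂ) :
    complexPairMap hc d (w • y) = complexPairMap hc d y * Complex.liftAux c hc w := by
  simp only [complexPairMap_apply, Prod.smul_fst, Prod.smul_snd, smul_eq_mul, map_mul, add_mul,
    mul_assoc, mul_comm w]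

variable {d}

theorem complexPairMap_injective (hd : d ≠ 0) (hcd : d * c = -(c * d)) :
    Function.Injective (complexPairMap hc d) := by
  set ι := Complex.liftAux c hc
  have hι : Function.Injective ι := ι.toRingHom.injective
  refine (injective_iff_map_eq_zero _).2 fun ⟨z, w⟩ h => ?_
  rw [complexPairMap_apply, add_eq_zero_iff_neg_eq] at h
  obtain rfl : w = 0 := by
    by_contra hw
    have hιw : ι w ≠ 0 := (map_ne_zero_iff ι hι).2 hw
    -- otherwise `d = -ι (z / w)` would commute with `c = ι I`
    have hd_eq : d = ι (-z * w⁻¹) := by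
      rw [map_mul, map_inv₀, map_neg, h, mul_inv_cancel_right₀ hιw]
    have hcomm : d * c = c * d := by
      rw [hd_eq, ← Complex.liftAux_apply_I c hc, ← map_mul, ← map_mul, mul_comm]
    have hc0 : c ≠ 0 := by rintro rfl; simp at hc
    rw [hcomm, eq_neg_iff_add_eq_zero, ← two_smul ℝ, smul_eq_zero, mul_eq_zero] at hcd
    exact hcd.elim two_ne_zero (Or.elim · hc0 hd)
  rw [map_zero, mul_zero, neg_eq_zero] at h
  simpa using hι (h.trans (map_zero ι).symm)

variable (hd : d ≠ 0) (hcd : d * c = -(c * d))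

def complexPairEquiv : (ℂ × ℂ) ≃L[ℝ] ℍ[ℝ] :=
  have hinj := complexPairMap_injective hc hd hcd
  (LinearEquiv.ofBijective (complexPairMap hc d) ⟨hinj,
    (LinearMap.injective_iff_surjective_of_finrank_eq_finrank
      (by simp [Module.finrank_prod, Quaternion.finrank_eq_four])).1 hinj⟩).toContinuousLinearEquiv

theorem complexPairEquiv_apply (y : ℂ × ℂ) :
    complexPairEquiv hc hd hcd y = complexPairMap hc d y :=
  rfl

theorem complexPairEquiv_symm_mul (x : ℍ[ℝ]) (w : ℂ) :
    (complexPairEquiv hc hd hcd).symm (x * Complex.liftAux c hc w)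
      = w • (complexPairEquiv hc hd hcd).symm x := by
  rw [ContinuousLinearEquiv.symm_apply_eq, complexPairEquiv_apply, complexPairMap_smul,
    ← complexPairEquiv_apply hc hd hcd, ContinuousLinearEquiv.apply_symm_apply]

end ComplexPair

theorem HasFDerivAt.hasDerivAt_of_apply_eq_smul {F : Type*} [NormedAddCommGroup F]
    [NormedSpace ℂ F] {g : ℂ → F} {ℓ : ℂ →L[ℝ] F} {z : ℂ} {v : F} (h : HasFDerivAt g ℓ z)
    (hℓ : ∀ w, ℓ w = w • v) : HasDerivAt g v z := by
  simpa using (hasFDerivAt_of_restrictScalars ℝ (f' := (1 : ℂ →L[ℂ] ℂ).smulRight v) h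
    (ContinuousLinearMap.ext fun w => by simp [hℓ])).hasDerivAt

theorem exists_hasLineDerivAt_mul_slice {D : Set ℍ[ℝ]} (hD : IsOpen D) {f L : ℍ[ℝ] → ℍ[ℝ]}
    (hf : ∀ p ∈ D, HasFDerivAt f (ContinuousLinearMap.mul ℝ ℍ[ℝ] (L p)) p)
    {c d : ℍ[ℝ]} (hc : c * c = -1) (hd : d ≠ 0) (hcd : d * c = -(c * d))
    {q : ℍ[ℝ]} (hq : q ∈ D) (a : ℍ[ℝ]) :
    ∃ B : ℍ[ℝ], ∀ w : ℂ, HasLineDerivAt ℝ (fun p => L p * a) (B * Complex.liftAux c hc w) q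
      (a * Complex.liftAux c hc w) := by
  set ι := Complex.liftAux c hc
  set e := complexPairEquiv hc hd hcd
  set ψ' : ℂ →L[ℝ] ℍ[ℝ] :=
    (ContinuousLinearMap.mul ℝ ℍ[ℝ] a).comp (LinearMap.toContinuousLinearMap ι.toLinearMap)
  set ψ : ℂ → ℍ[ℝ] := fun z => q + ψ' z
  have hψ : ∀ z, HasFDerivAt ψ ψ' z := fun z => ψ'.hasFDerivAt.const_add q
  set U := ψ ⁻¹' D
  have hU : U ∈ 𝓝 0 :=
    (hψ 0).continuousAt.preimage_mem_nhds (by simpa [ψ] using hD.mem_nhds hq)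
  set H : ℂ → ℂ × ℂ := fun z => e.symm (L (ψ z) * a)
  have hG : ∀ z ∈ U, HasDerivAt (fun z => e.symm (f (ψ z))) (H z) z := fun z hz =>
    (e.symm.hasFDerivAt.comp z ((hf _ hz).comp z (hψ z))).hasDerivAt_of_apply_eq_smul fun w => by
      change e.symm (L (ψ z) * (a * ι w)) = w • H z
      rw [← mul_assoc, complexPairEquiv_symm_mul]
  have hH : DifferentiableAt ℂ H 0 := by
    have hUo : IsOpen U := hD.preimage (continuous_iff_continuousAt.2 fun z => (hψ z).continuousAt)
    have hGd : DifferentiableOn ℂ (fun z => e.symm (f (ψ z))) U := fun z hz =>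
      (hG z hz).differentiableAt.differentiableWithinAt
    have hderiv := hGd.deriv hUo
    refine ((hderiv 0 (mem_of_mem_nhds hU)).differentiableAt hU).congr_of_eventuallyEq ?_
    filter_upwards [hU] with z hz using ((hG z hz).deriv).symm
  refine ⟨e (deriv H 0), fun w => ?_⟩
  have hmul : HasDerivAt (fun t : ℝ => (t : ℂ) * w) w 0 := by
    simpa using (Complex.ofRealCLM.hasDerivAt (x := 0)).mul_const w
  have hslice : HasDerivAt (fun t : ℝ => H (t * w)) (w • deriv H 0) 0 := by
    have := (hH.hasDerivAt.hasFDerivAt.restrictScalars ℝ).comp_hasDerivAt_of_eq (0 : ℝ) hmul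
      (by simp)
    simp only [ContinuousLinearMap.coe_restrictScalars'] at this
    exact this
  have hline := e.hasFDerivAt.comp_hasDerivAt (0 : ℝ) hslice
  rw [HasLineDerivAt]
  convert hline using 1
  · funext t
    change L (q + t • (a * ι w)) * a = e (e.symm (L (q + a * ι (t * w)) * a))
    rw [ContinuousLinearEquiv.apply_symm_apply, ← Complex.real_smul, map_smul, mul_smul_comm]
  · exact (complexPairMap_smul hc d w _).symm

theorem qI_mul_qI : qI * qI = -1 := by
  ext <;> simp [re_mul, imI_mul, imJ_mul, imK_mul] <;> simp [qI]
theorem qJ_mul_qJ : qJ * qJ = -1 := by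
  ext <;> simp [re_mul, imI_mul, imJ_mul, imK_mul] <;> simp [qJ]
theorem qK_mul_qK : qK * qK = -1 := by
  ext <;> simp [re_mul, imI_mul, imJ_mul, imK_mul] <;> simp [qK]
theorem qI_mul_qJ : qI * qJ = qK := by
  ext <;> simp [re_mul, imI_mul, imJ_mul, imK_mul] <;> simp [qI, qJ, qK]
theorem qJ_mul_qK : qJ * qK = qI := by
  ext <;> simp [re_mul, imI_mul, imJ_mul, imK_mul] <;> simp [qI, qJ, qK]
theorem qJ_mul_qI : qJ * qI = -(qI * qJ) := by
  ext <;> simp [re_mul, imI_mul, imJ_mul, imK_mul] <;> simp [qI, qJ]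
theorem qK_mul_qJ : qK * qJ = -(qJ * qK) := by
  ext <;> simp [re_mul, imI_mul, imJ_mul, imK_mul] <;> simp [qJ, qK]
theorem qI_mul_qK : qI * qK = -(qK * qI) := by
  ext <;> simp [re_mul, imI_mul, imJ_mul, imK_mul] <;> simp [qI, qK]

theorem hasLineDerivAt_eq_zero_of_hasFDerivAt_mul {D : Set ℍ[ℝ]} (hD : IsOpen D)
    {f L : ℍ[ℝ] → ℍ[ℝ]} (hf : ∀ p ∈ D, HasFDerivAt f (ContinuousLinearMap.mul ℝ ℍ[ℝ] (L p)) p)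
    {q : ℍ[ℝ]} (hq : q ∈ D) : ∀ e ∈ ({1, qI, qJ, qK} : Set ℍ[ℝ]), HasLineDerivAt ℝ L 0 q e := by
  have hI0 : qI ≠ 0 := fun h => by simpa [h] using qI_mul_qI
  have hJ0 : qJ ≠ 0 := fun h => by simpa [h] using qJ_mul_qJ
  have hK0 : qK ≠ 0 := fun h => by simpa [h] using qK_mul_qK
  obtain ⟨A, hA⟩ := exists_hasLineDerivAt_mul_slice hD hf qI_mul_qI hJ0 qJ_mul_qI hq 1
  obtain ⟨A₂, hA₂⟩ := exists_hasLineDerivAt_mul_slice hD hf qJ_mul_qJ hK0 qK_mul_qJ hq 1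
  obtain ⟨A₃, hA₃⟩ := exists_hasLineDerivAt_mul_slice hD hf qK_mul_qK hI0 qI_mul_qK hq 1
  obtain ⟨B, hB⟩ := exists_hasLineDerivAt_mul_slice hD hf qK_mul_qK hI0 qI_mul_qK hq qJ
  have h1 : HasLineDerivAt ℝ L A q 1 := by simpa using hA 1
  have hi : HasLineDerivAt ℝ L (A * qI) q qI := by simpa using hA Complex.I
  have hj : HasLineDerivAt ℝ L (A₂ * qJ) q qJ := by simpa using hA₂ Complex.I
  have hk : HasLineDerivAt ℝ L (A₃ * qK) q qK := by simpa using hA₃ Complex.I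
  have hBj : HasLineDerivAt ℝ (fun p => L p * qJ) B q qJ := by simpa using hB 1
  have hBi : HasLineDerivAt ℝ (fun p => L p * qJ) (B * qK) q qI := by
    simpa [qJ_mul_qK] using hB Complex.I
  have hA₂A : A₂ = A := HasLineDerivAt.unique (by simpa using hA₂ 1) h1
  have hA₃A : A₃ = A := HasLineDerivAt.unique (by simpa using hA₃ 1) h1
  -- `∂ᵢ (L · * j)` is computed both from `∂ᵢ L = A i` and, as `i = j k`, from the slice through `j`
  have hB : B = -A := by
    rw [hBj.unique (HasDerivAt.mul_const hj qJ), hA₂A, mul_assoc, qJ_mul_qJ, mul_neg_one]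
  have hBk : B * qK = A * qK := by
    rw [hBi.unique (HasDerivAt.mul_const hi qJ), mul_assoc, qI_mul_qJ]
  have hA : A = 0 := by
    rw [hB, neg_mul, neg_eq_iff_add_eq_zero, ← two_smul ℝ, smul_eq_zero, mul_eq_zero] at hBk
    exact hBk.elim (absurd · two_ne_zero) (·.resolve_right hK0)
  rintro e (rfl | rfl | rfl | rfl)
  · simpa [hA] using h1
  · simpa [hA] using hi
  · simpa [hA₂A, hA] using hj
  · simpa [hA₃A, hA] using hk

theorem Convex.eq_of_hasLineDerivAt_eq_zero {E F : Type*} [NormedAddCommGroup E] [NormedSpace ℝ E]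
    [NormedAddCommGroup F] [NormedSpace ℝ F] {s : Set E} (hs : Convex ℝ s) {g : E → F} {v : E}
    (hg : ∀ p ∈ s, HasLineDerivAt ℝ g 0 p v) {x : E} (hx : x ∈ s) (hxv : x + v ∈ s) :
    g (x + v) = g x := by
  have hderiv : ∀ τ ∈ Icc (0 : ℝ) 1, HasDerivAt (fun τ : ℝ => g (x + τ • v)) 0 τ := by
    intro τ hτ
    have hshift := HasDerivAt.comp_sub_const τ τ (by
      rw [sub_self]; exact hg _ (hs.add_smul_mem hx hxv hτ))
    convert hshift using 2 with σ
    rw [add_assoc, ← add_smul, add_sub_cancel]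
  have := constant_of_has_deriv_right_zero
    (fun τ hτ => (hderiv τ hτ).continuousAt.continuousWithinAt)
    (fun τ hτ => (hderiv τ (Ico_subset_Icc_self hτ)).hasDerivWithinAt) 1
    (right_mem_Icc.2 zero_le_one)
  simpa using this

section LocallyConstant

variable {F : Type*} [NormedAddCommGroup F] [NormedSpace ℝ F] {g : ℍ[ℝ] → F}

theorem eq_on_ball_of_hasLineDerivAt_basis_eq_zero {x : ℍ[ℝ]} {r : ℝ}
    (hg : ∀ p ∈ ball x r, ∀ e ∈ ({1, qI, qJ, qK} : Set ℍ[ℝ]), HasLineDerivAt ℝ g 0 p e)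
    {y : ℍ[ℝ]} (hy : y ∈ ball x r) : g y = g x := by
  have step : ∀ p ∈ ball x r, ∀ e ∈ ({1, qI, qJ, qK} : Set ℍ[ℝ]), ∀ t : ℝ,
      p + t • e ∈ ball x r → g (p + t • e) = g p := fun p hp e he t hpt =>
    (convex_ball x r).eq_of_hasLineDerivAt_eq_zero
      (fun p' hp' => by simpa using (hg p' hp' e he).smul t) hp hpt
  have mem : ∀ p : ℍ[ℝ], normSq (p - x) ≤ normSq (y - x) → p ∈ ball x r := by
    intro p hp
    rw [mem_ball_iff_norm] at hy ⊢
    refine lt_of_le_of_lt ?_ hy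
    rwa [mul_self_le_mul_self_iff (norm_nonneg _) (norm_nonneg _), ← normSq_eq_norm_mul_self,
      ← normSq_eq_norm_mul_self]
  -- walk from `x` to `y` one coordinate at a time; the partial sums stay in the ball
  set v := y - x
  set p₁ := x + v.re • (1 : ℍ[ℝ])
  set p₂ := p₁ + v.imI • qI
  set p₃ := p₂ + v.imJ • qJ
  have hy₃ : y = p₃ + v.imK • qK := by
    ext <;> simp [p₁, p₂, p₃, v] <;> simp [qI, qJ, qK]
  have hx : x ∈ ball x r := mem_ball_self (pos_of_mem_ball hy)
  have hsq : 0 ≤ v.imI ^ 2 ∧ 0 ≤ v.imJ ^ 2 ∧ 0 ≤ v.imK ^ 2 :=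
    ⟨sq_nonneg _, sq_nonneg _, sq_nonneg _⟩
  have h₁ : p₁ ∈ ball x r := mem p₁ (by simp [p₁, normSq_def']; linarith)
  have h₂ : p₂ ∈ ball x r := mem p₂ (by simp [p₁, p₂, normSq_def']; simp [qI]; linarith)
  have h₃ : p₃ ∈ ball x r := mem p₃ (by simp [p₁, p₂, p₃, normSq_def']; simp [qI, qJ]; linarith)
  calc g y = g p₃ := by rw [hy₃]; exact step p₃ h₃ qK (by simp) _ (hy₃ ▸ hy)
    _ = g p₂ := step p₂ h₂ qJ (by simp) _ h₃
    _ = g p₁ := step p₁ h₁ qI (by simp) _ h₂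
    _ = g x := step x hx 1 (by simp) _ h₁

theorem IsOpen.exists_eq_of_hasLineDerivAt_basis_eq_zero {D : Set ℍ[ℝ]} (hD : IsOpen D)
    (hDc : IsPreconnected D)
    (hg : ∀ p ∈ D, ∀ e ∈ ({1, qI, qJ, qK} : Set ℍ[ℝ]), HasLineDerivAt ℝ g 0 p e) :
    ∃ ω, ∀ x ∈ D, g x = ω := by
  have hzero : ∀ x ∈ D, HasFDerivAt g (0 : ℍ[ℝ] →L[ℝ] F) x := by
    intro x hx
    obtain ⟨r, hr, hrD⟩ := Metric.isOpen_iff.1 hD x hx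
    refine (hasFDerivAt_const (g x) x).congr_of_eventuallyEq ?_
    filter_upwards [ball_mem_nhds x hr] with y hy using
      eq_on_ball_of_hasLineDerivAt_basis_eq_zero (fun p hp => hg p (hrD hp)) hy
  exact hD.exists_is_const_of_fderiv_eq_zero hDc
    (fun x hx => (hzero x hx).differentiableAt.differentiableWithinAt)
    (fun x hx => (hzero x hx).fderiv)

end LocallyConstant

theorem left_quotient_limit_implies_affine
    (D : Set ℍ[ℝ]) (hD : IsOpen D) (hDconn : IsConnected D) (f : ℍ[ℝ] → ℍ[ℝ])
    (hlim : ∀ q ∈ D, ∃ L : ℍ[ℝ],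
      Tendsto (fun h : ℍ[ℝ] => (f (q + h) - f q) * h⁻¹)
        (𝓝[{h : ℍ[ℝ] | h ≠ 0 ∧ q + h ∈ D}] 0) (𝓝 L)) :
    ∃ ω lam : ℍ[ℝ], ∀ q ∈ D, f q = ω * q + lam := by
  choose! L hL using hlim
  have hf : ∀ q ∈ D, HasFDerivAt f (ContinuousLinearMap.mul ℝ ℍ[ℝ] (L q)) q := fun q hq =>
    hasFDerivAt_mul_of_tendsto_quotient (hD.mem_nhds hq) (hL q hq)
  obtain ⟨ω, hω⟩ := hD.exists_eq_of_hasLineDerivAt_basis_eq_zero hDconn.isPreconnected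
    fun p hp => hasLineDerivAt_eq_zero_of_hasFDerivAt_mul hD hf hp
  have hωq : ∀ q, HasFDerivAt (fun q => ω * q) (ContinuousLinearMap.mul ℝ ℍ[ℝ] ω) q := fun q =>
    (ContinuousLinearMap.mul ℝ ℍ[ℝ] ω).hasFDerivAt
  obtain ⟨lam, hlam⟩ := hD.exists_eq_add_of_fderiv_eq hDconn.isPreconnected (g := fun q => ω * q)
    (fun q hq => (hf q hq).differentiableAt.differentiableWithinAt)
    (fun q _ => (hωq q).differentiableAt.differentiableWithinAt)
    (fun q hq => by rw [(hf q hq).fderiv, (hωq q).fderiv, hω q hq])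
  exact ⟨ω, lam, hlam⟩

end
end

section
/- Let μ ∈ ℍ be nonzero and let f₁, f₂, f₃, f₄ ∈ ℍ. If f₁·(h^μ)* + f₂·(h^{μi})* + f₃·(h^{μj})* + f₄·(h^{μk})* = 0 for every h ∈ ℍ, then f₁ = f₂ = f₃ = f₄ = 0. -/
open Quaternion Filter Topology Asymptotics

noncomputable section

/-! Conjugation by `u ∈ {i, j, k}` fixes `1` and `u` and negates the other two units, and
`(μu) p (μu)⁻¹ = μ (u p u⁻¹) μ⁻¹`. So evaluating the hypothesis at `p = 1, i, j, k` gives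
`(f₁ ± f₂ ± f₃ ± f₄) (p^μ)* = 0` with the sign pattern of a `4 × 4` Hadamard matrix. The
factor `(p^μ)*` is nonzero, and the Hadamard matrix `H` satisfies `H² = 4`. -/

@[simp] lemma qI_re : qI.re = 0 := rfl
@[simp] lemma qI_imI : qI.imI = 1 := rfl
@[simp] lemma qI_imJ : qI.imJ = 0 := rfl
@[simp] lemma qI_imK : qI.imK = 0 := rfl
@[simp] lemma qJ_re : qJ.re = 0 := rfl
@[simp] lemma qJ_imI : qJ.imI = 0 := rfl
@[simp] lemma qJ_imJ : qJ.imJ = 1 := rfl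
@[simp] lemma qJ_imK : qJ.imK = 0 := rfl
@[simp] lemma qK_re : qK.re = 0 := rfl
@[simp] lemma qK_imI : qK.imI = 0 := rfl
@[simp] lemma qK_imJ : qK.imJ = 0 := rfl
@[simp] lemma qK_imK : qK.imK = 1 := rfl

lemma qI_anticomm_qJ : qI * qJ + qJ * qI = 0 := by ext <;> simp

lemma qJ_anticomm_qK : qJ * qK + qK * qJ = 0 := by ext <;> simp

lemma qK_anticomm_qI : qK * qI + qI * qK = 0 := by ext <;> simp

lemma qI_ne_zero : qI ≠ 0 := fun h => by simpa using congrArg (·.imI) h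

lemma qJ_ne_zero : qJ ≠ 0 := fun h => by simpa using congrArg (·.imJ) h

lemma qK_ne_zero : qK ≠ 0 := fun h => by simpa using congrArg (·.imK) h

section Rotation

variable {μ ν p : ℍ[ℝ]}

lemma qRot_mul : qRot (μ * ν) p = qRot μ (qRot ν p) := by
  simp only [qRot, mul_inv_rev, mul_assoc]

lemma qRot_neg : qRot μ (-p) = -qRot μ p := by
  simp only [qRot, mul_neg, neg_mul]

lemma qRot_one (hμ : μ ≠ 0) : qRot μ 1 = 1 := by
  rw [qRot, mul_one, mul_inv_cancel₀ hμ]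

lemma qRot_self (hμ : μ ≠ 0) : qRot μ μ = μ := by
  rw [qRot, mul_assoc, mul_inv_cancel₀ hμ, mul_one]

lemma qRot_of_anticomm (hν : ν ≠ 0) (h : ν * p + p * ν = 0) : qRot ν p = -p := by
  rw [qRot, add_eq_zero_iff_eq_neg.mp h, neg_mul, mul_assoc, mul_inv_cancel₀ hν, mul_one]

lemma qRot_ne_zero (hμ : μ ≠ 0) (hp : p ≠ 0) : qRot μ p ≠ 0 :=
  mul_ne_zero (mul_ne_zero hμ hp) (inv_ne_zero hμ)

lemma eq_zero_of_mul_star_qRot_eq_zero (hμ : μ ≠ 0) (hp : p ≠ 0) {g : ℍ[ℝ]}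
    (hg : g * star (qRot μ p) = 0) : g = 0 :=
  (mul_eq_zero.mp hg).resolve_right (star_ne_zero.2 (qRot_ne_zero hμ hp))

end Rotation

lemma eq_zero_of_hadamard_combinations_eq_zero {M : Type*} [AddCommGroup M] [IsAddTorsionFree M]
    {a b c d : M} (h₁ : a + b + c + d = 0) (h₂ : a + b - c - d = 0)
    (h₃ : a - b + c - d = 0) (h₄ : a - b - c + d = 0) :
    a = 0 ∧ b = 0 ∧ c = 0 ∧ d = 0 := by
  refine ⟨?_, ?_, ?_, ?_⟩ <;> refine (nsmul_eq_zero_iff_right (four_ne_zero' ℕ)).mp ?_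
  · calc 4 • a = (a + b + c + d) + (a + b - c - d) + (a - b + c - d) + (a - b - c + d) := by abel
      _ = 0 := by rw [h₁, h₂, h₃, h₄]; abel
  · calc 4 • b = (a + b + c + d) + (a + b - c - d) - (a - b + c - d) - (a - b - c + d) := by abel
      _ = 0 := by rw [h₁, h₂, h₃, h₄]; abel
  · calc 4 • c = (a + b + c + d) - (a + b - c - d) + (a - b + c - d) - (a - b - c + d) := by abel
      _ = 0 := by rw [h₁, h₂, h₃, h₄]; abel
  · calc 4 • d = (a + b + c + d) - (a + b - c - d) - (a - b + c - d) + (a - b - c + d) := by abel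
      _ = 0 := by rw [h₁, h₂, h₃, h₄]; abel

theorem left_conjugate_rotated_differentials_independent
    (μ : ℍ[ℝ]) (hμ : μ ≠ 0) (f₁ f₂ f₃ f₄ : ℍ[ℝ])
    (h : ∀ p : ℍ[ℝ], f₁ * star (qRot μ p) + f₂ * star (qRot (μ * qI) p)
      + f₃ * star (qRot (μ * qJ) p) + f₄ * star (qRot (μ * qK) p) = 0) :
    f₁ = 0 ∧ f₂ = 0 ∧ f₃ = 0 ∧ f₄ = 0 := by
  have hIJ := qRot_of_anticomm qI_ne_zero qI_anticomm_qJ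
  have hJI := qRot_of_anticomm qJ_ne_zero ((add_comm _ _).trans qI_anticomm_qJ)
  have hJK := qRot_of_anticomm qJ_ne_zero qJ_anticomm_qK
  have hKJ := qRot_of_anticomm qK_ne_zero ((add_comm _ _).trans qJ_anticomm_qK)
  have hKI := qRot_of_anticomm qK_ne_zero qK_anticomm_qI
  have hIK := qRot_of_anticomm qI_ne_zero ((add_comm _ _).trans qK_anticomm_qI)
  simp only [qRot_mul] at h
  have : IsAddTorsionFree ℍ[ℝ] := .of_isTorsionFree ℝ _
  apply eq_zero_of_hadamard_combinations_eq_zero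
  · refine eq_zero_of_mul_star_qRot_eq_zero hμ one_ne_zero ?_
    rw [← h 1, qRot_one qI_ne_zero, qRot_one qJ_ne_zero, qRot_one qK_ne_zero]
    noncomm_ring
  · refine eq_zero_of_mul_star_qRot_eq_zero hμ qI_ne_zero ?_
    rw [← h qI, qRot_self qI_ne_zero, hJI, hKI]
    simp only [qRot_neg, star_neg]; noncomm_ring
  · refine eq_zero_of_mul_star_qRot_eq_zero hμ qJ_ne_zero ?_
    rw [← h qJ, qRot_self qJ_ne_zero, hIJ, hKJ]
    simp only [qRot_neg, star_neg]; noncomm_ring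
  · refine eq_zero_of_mul_star_qRot_eq_zero hμ qK_ne_zero ?_
    rw [← h qK, qRot_self qK_ne_zero, hIK, hJK]
    simp only [qRot_neg, star_neg]; noncomm_ring

end
end

section
/- Let f, g : ℍ → ℍ be real-(Fréchet-)differentiable at q ∈ ℍ, and let μ ∈ ℍ be nonzero with g(q)·μ ≠ 0. Then the product fg is real-differentiable at q and the left GHR derivatives satisfy the product rule ∂(fg)/∂q^μ(q) = f(q)·∂g/∂q^μ(q) + ∂f/∂q^{g(q)μ}(q)·g(q) and ∂(fg)/∂q^{μ*}(q) = f(q)·∂g/∂q^{μ*}(q) + ∂f/∂q^{g(q)μ*}(q)·g(q). -/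
open Quaternion Filter Topology Asymptotics

noncomputable section

theorem left_GHR_product_rule
    (f g : ℍ[ℝ] → ℍ[ℝ]) (q μ : ℍ[ℝ])
    (hf : DifferentiableAt ℝ f q) (hg : DifferentiableAt ℝ g q)
    (hμ : μ ≠ 0) (hgμ : g q * μ ≠ 0) :
    DifferentiableAt ℝ (fun p => f p * g p) q ∧
    lD (fun p => f p * g p) μ q = f q * lD g μ q + lD f (g q * μ) q * g q ∧
    lDc (fun p => f p * g p) μ q = f q * lDc g μ q + lDc f (g q * μ) q * g q := by

  have hg0 : g q ≠ 0 := fun h => hgμ (by simp [h])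
  have hD : HasFDerivAt (fun p => f p * g p)
      (f q • fderiv ℝ g q + (fderiv ℝ f q).smulRight (g q)) q :=
    hf.hasFDerivAt.mul' hg.hasFDerivAt
  have hfd : ∀ v, fderiv ℝ (fun p => f p * g p) q v
      = f q * fderiv ℝ g q v + fderiv ℝ f q v * g q := by
    intro v
    rw [hD.fderiv]
    simp [smul_eq_mul]
  have hrot : ∀ x : ℍ[ℝ], qRot (g q * μ) x * g q = g q * qRot μ x := by
    intro x
    simp [qRot, mul_inv_rev, mul_assoc, inv_mul_cancel₀ hg0]
  have h4 : ∀ x : ℍ[ℝ], (4 : ℍ[ℝ])⁻¹ * x = (4⁻¹ : ℝ) • x := by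
    intro x
    have : ((4 : ℝ) : ℍ[ℝ]) = (4 : ℍ[ℝ]) := by norm_cast
    rw [← this, ← Quaternion.coe_inv, Quaternion.coe_mul_eq_smul]
  have keyS : ∀ a1 ai aj ak : ℍ[ℝ],
      (a1 - ai * qRot (g q * μ) qI - aj * qRot (g q * μ) qJ
        - ak * qRot (g q * μ) qK) * g q
      = a1 * g q - ai * (g q * qRot μ qI) - aj * (g q * qRot μ qJ)
        - ak * (g q * qRot μ qK) := by
    intro a1 ai aj ak
    calc (a1 - ai * qRot (g q * μ) qI - aj * qRot (g q * μ) qJ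
        - ak * qRot (g q * μ) qK) * g q
        = a1 * g q - ai * (qRot (g q * μ) qI * g q)
          - aj * (qRot (g q * μ) qJ * g q)
          - ak * (qRot (g q * μ) qK * g q) := by noncomm_ring
      _ = _ := by rw [hrot qI, hrot qJ, hrot qK]
  have keyA : ∀ a1 ai aj ak : ℍ[ℝ],
      (a1 + ai * qRot (g q * μ) qI + aj * qRot (g q * μ) qJ
        + ak * qRot (g q * μ) qK) * g q
      = a1 * g q + ai * (g q * qRot μ qI) + aj * (g q * qRot μ qJ)
        + ak * (g q * qRot μ qK) := by
    intro a1 ai aj ak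
    calc (a1 + ai * qRot (g q * μ) qI + aj * qRot (g q * μ) qJ
        + ak * qRot (g q * μ) qK) * g q
        = a1 * g q + ai * (qRot (g q * μ) qI * g q)
          + aj * (qRot (g q * μ) qJ * g q)
          + ak * (qRot (g q * μ) qK * g q) := by noncomm_ring
      _ = _ := by rw [hrot qI, hrot qJ, hrot qK]
  refine ⟨hD.differentiableAt, ?_, ?_⟩
  · simp only [lD, hfd, h4]
    rw [mul_smul_comm, smul_mul_assoc, ← smul_add]
    congr 1
    rw [keyS]
    noncomm_ring
  · simp only [lDc, hfd, h4]
    rw [mul_smul_comm, smul_mul_assoc, ← smul_add]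
    congr 1
    rw [keyA]
    noncomm_ring

end
end

section
/- Let f : ℍ → ℍ and g : ℍ → ℝ (regarded as the real-valued quaternion function q ↦ (g(q) : ℍ)) be real-(Fréchet-)differentiable at q ∈ ℍ, and let μ ∈ ℍ be nonzero. Then the left GHR derivatives of the product fg satisfy the traditional product rule ∂(fg)/∂q^μ(q) = f(q)·∂g/∂q^μ(q) + ∂f/∂q^μ(q)·g(q) and ∂(fg)/∂q^{μ*}(q) = f(q)·∂g/∂q^{μ*}(q) + ∂f/∂q^{μ*}(q)·g(q). -/
open Quaternion Filter Topology Asymptotics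

noncomputable section

theorem fderiv_mul_apply {𝕜 E 𝔸 : Type*} [NontriviallyNormedField 𝕜] [NormedAddCommGroup E]
    [NormedSpace 𝕜 E] [NormedRing 𝔸] [NormedAlgebra 𝕜 𝔸] {f g : E → 𝔸} {q : E}
    (hf : DifferentiableAt 𝕜 f q) (hg : DifferentiableAt 𝕜 g q) (v : E) :
    fderiv 𝕜 (fun p => f p * g p) q v = f q * fderiv 𝕜 g q v + fderiv 𝕜 f q v * g q := by
  rw [fderiv_fun_mul' hf hg]
  rfl

section ProductRule

variable {f g : ℍ[ℝ] → ℍ[ℝ]} {q : ℍ[ℝ]}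

theorem lD_mul_of_commute (hf : DifferentiableAt ℝ f q) (hg : DifferentiableAt ℝ g q)
    (hgq : ∀ x, Commute (g q) x) (μ : ℍ[ℝ]) :
    lD (fun p => f p * g p) μ q = f q * lD g μ q + lD f μ q * g q := by
  have hinv4 : Commute (4 : ℍ[ℝ])⁻¹ (f q) := (Nat.cast_commute 4 (f q)).inv_left₀
  -- `g q` is moved past each rotated unit `μ e μ⁻¹`, so that it factors out on the right.
  simp only [lD, fderiv_mul_apply hf hg, add_mul, mul_assoc, (hgq _).eq]
  rw [← hinv4.left_comm]
  noncomm_ring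

theorem lDc_mul_of_commute (hf : DifferentiableAt ℝ f q) (hg : DifferentiableAt ℝ g q)
    (hgq : ∀ x, Commute (g q) x) (μ : ℍ[ℝ]) :
    lDc (fun p => f p * g p) μ q = f q * lDc g μ q + lDc f μ q * g q := by
  have hinv4 : Commute (4 : ℍ[ℝ])⁻¹ (f q) := (Nat.cast_commute 4 (f q)).inv_left₀
  simp only [lDc, fderiv_mul_apply hf hg, add_mul, mul_assoc, (hgq _).eq]
  rw [← hinv4.left_comm]
  noncomm_ring

end ProductRule

theorem left_GHR_product_rule_real_factor_general
    (f : ℍ[ℝ] → ℍ[ℝ]) (g : ℍ[ℝ] → ℝ) (q μ : ℍ[ℝ])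
    (hf : DifferentiableAt ℝ f q)
    (hg : DifferentiableAt ℝ (fun p => ((g p : ℝ) : ℍ[ℝ])) q) :
    lD (fun p => f p * ((g p : ℝ) : ℍ[ℝ])) μ q
      = f q * lD (fun p => ((g p : ℝ) : ℍ[ℝ])) μ q + lD f μ q * ((g q : ℝ) : ℍ[ℝ]) ∧
    lDc (fun p => f p * ((g p : ℝ) : ℍ[ℝ])) μ q
      = f q * lDc (fun p => ((g p : ℝ) : ℍ[ℝ])) μ q + lDc f μ q * ((g q : ℝ) : ℍ[ℝ]) :=
  ⟨lD_mul_of_commute hf hg (coe_commute (g q)) μ, lDc_mul_of_commute hf hg (coe_commute (g q)) μ⟩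

theorem left_GHR_product_rule_real_factor
    (f : ℍ[ℝ] → ℍ[ℝ]) (g : ℍ[ℝ] → ℝ) (q μ : ℍ[ℝ])
    (hf : DifferentiableAt ℝ f q)
    (hg : DifferentiableAt ℝ (fun p => ((g p : ℝ) : ℍ[ℝ])) q)
    (hμ : μ ≠ 0) :
    lD (fun p => f p * ((g p : ℝ) : ℍ[ℝ])) μ q
      = f q * lD (fun p => ((g p : ℝ) : ℍ[ℝ])) μ q + lD f μ q * ((g q : ℝ) : ℍ[ℝ]) ∧
    lDc (fun p => f p * ((g p : ℝ) : ℍ[ℝ])) μ q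
      = f q * lDc (fun p => ((g p : ℝ) : ℍ[ℝ])) μ q + lDc f μ q * ((g q : ℝ) : ℍ[ℝ]) :=
  left_GHR_product_rule_real_factor_general f g q μ hf hg

end
end

section
/- Let f, g : ℍ → ℍ be real-(Fréchet-)differentiable at q ∈ ℍ, and let μ ∈ ℍ be nonzero with f(q)*·μ ≠ 0. Then the right GHR derivatives satisfy the product rule ∂ᵣ(fg)/∂q^μ(q) = ∂ᵣf/∂q^μ(q)·g(q) + f(q)·∂ᵣg/∂q^{f(q)*μ}(q) and ∂ᵣ(fg)/∂q^{μ*}(q) = ∂ᵣf/∂q^{μ*}(q)·g(q) + f(q)·∂ᵣg/∂q^{f(q)*μ*}(q). -/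
open Quaternion Filter Topology Asymptotics

noncomputable section

lemma quarter_comm' (x : ℍ[ℝ]) : x * (4 : ℍ[ℝ])⁻¹ = (4 : ℍ[ℝ])⁻¹ * x := by
  have h4 : (4 : ℍ[ℝ]) = ((4 : ℝ) : ℍ[ℝ]) := by
    rw [show ((4:ℝ):ℍ[ℝ]) = ((4:ℕ):ℝ) by norm_num, Quaternion.coe_natCast]; norm_num
  rw [h4, ← Quaternion.coe_inv, Quaternion.coe_commutes]

lemma qRot_key (a μ e : ℍ[ℝ]) (ha : a ≠ 0) :
    a * qRot (star a * μ) e = qRot μ e * a := by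
  have hsa : star a ≠ 0 := star_ne_zero.2 ha
  refine mul_right_cancel₀ hsa ?_
  have h1 : a * star a = ((normSq a : ℝ) : ℍ[ℝ]) := Quaternion.self_mul_star a
  simp only [qRot, mul_inv_rev, mul_assoc, inv_mul_cancel₀ hsa, mul_one]
  rw [← mul_assoc a (star a), h1, Quaternion.coe_commutes]
  simp [mul_assoc]

lemma ghr_algL (F G D1 Di Dj Dk E1 Ei Ej Ek Ri Rj Rk Si Sj Sk : ℍ[ℝ])
    (hi : F * Si = Ri * F) (hj : F * Sj = Rj * F) (hk : F * Sk = Rk * F) :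
    (4:ℍ[ℝ])⁻¹ * ((F*E1 + D1*G) - Ri*(F*Ei + Di*G) - Rj*(F*Ej + Dj*G) - Rk*(F*Ek + Dk*G))
    = (4:ℍ[ℝ])⁻¹ * (D1 - Ri*Di - Rj*Dj - Rk*Dk) * G
      + F * ((4:ℍ[ℝ])⁻¹ * (E1 - Si*Ei - Sj*Ej - Sk*Ek)) := by
  rw [← mul_assoc F, quarter_comm', mul_assoc ((4:ℍ[ℝ])⁻¹) F, mul_assoc ((4:ℍ[ℝ])⁻¹) _ G,
    ← mul_add]
  congr 1
  rw [mul_sub, mul_sub, mul_sub, ← mul_assoc F Si, hi, ← mul_assoc F Sj, hj, ← mul_assoc F Sk, hk]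
  noncomm_ring

lemma ghr_algR (F G D1 Di Dj Dk E1 Ei Ej Ek Ri Rj Rk Si Sj Sk : ℍ[ℝ])
    (hi : F * Si = Ri * F) (hj : F * Sj = Rj * F) (hk : F * Sk = Rk * F) :
    (4:ℍ[ℝ])⁻¹ * ((F*E1 + D1*G) + Ri*(F*Ei + Di*G) + Rj*(F*Ej + Dj*G) + Rk*(F*Ek + Dk*G))
    = (4:ℍ[ℝ])⁻¹ * (D1 + Ri*Di + Rj*Dj + Rk*Dk) * G
      + F * ((4:ℍ[ℝ])⁻¹ * (E1 + Si*Ei + Sj*Ej + Sk*Ek)) := by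
  rw [← mul_assoc F, quarter_comm', mul_assoc ((4:ℍ[ℝ])⁻¹) F, mul_assoc ((4:ℍ[ℝ])⁻¹) _ G,
    ← mul_add]
  congr 1
  have hx : F * (E1 + Si * Ei + Sj * Ej + Sk * Ek)
      = F * E1 + Ri * (F * Ei) + Rj * (F * Ej) + Rk * (F * Ek) := by
    simp only [mul_add, ← mul_assoc, hi, hj, hk]
  rw [hx]
  noncomm_ring

theorem right_GHR_product_rule
    (f g : ℍ[ℝ] → ℍ[ℝ]) (q μ : ℍ[ℝ])
    (hf : DifferentiableAt ℝ f q) (hg : DifferentiableAt ℝ g q)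
    (hμ : μ ≠ 0) (hfμ : star (f q) * μ ≠ 0) :
    rD (fun p => f p * g p) μ q = rD f μ q * g q + f q * rD g (star (f q) * μ) q ∧
    rDc (fun p => f p * g p) μ q = rDc f μ q * g q + f q * rDc g (star (f q) * μ) q := by
  have hF : f q ≠ 0 := by
    intro h; apply hfμ; rw [h, star_zero, zero_mul]
  have hD : fderiv ℝ (fun p => f p * g p) q
      = f q • fderiv ℝ g q + (fderiv ℝ f q).smulRight (g q) := fderiv_mul' hf hg
  have hDv : ∀ v, fderiv ℝ (fun p => f p * g p) q v
      = f q * fderiv ℝ g q v + fderiv ℝ f q v * g q := by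
    intro v; rw [hD]; simp [smul_eq_mul]
  have k : ∀ e, f q * qRot (star (f q) * μ) e = qRot μ e * f q :=
    fun e => qRot_key _ _ _ hF
  constructor
  · simp only [rD, hDv]
    exact ghr_algL (f q) (g q) _ _ _ _ _ _ _ _ _ _ _ _ _ _ (k qI) (k qJ) (k qK)
  · simp only [rDc, hDv]
    exact ghr_algR (f q) (g q) _ _ _ _ _ _ _ _ _ _ _ _ _ _ (k qI) (k qJ) (k qK)

end
end

section
/- Let f : ℍ → ℝ (regarded as the real-valued quaternion function q ↦ (f(q) : ℍ)) and g : ℍ → ℍ be real-(Fréchet-)differentiable at q ∈ ℍ, and let μ ∈ ℍ be nonzero. Then the right GHR derivatives of the product fg satisfy the traditional product rule ∂ᵣ(fg)/∂q^μ(q) = ∂ᵣf/∂q^μ(q)·g(q) + f(q)·∂ᵣg/∂q^μ(q) and ∂ᵣ(fg)/∂q^{μ*}(q) = ∂ᵣf/∂q^{μ*}(q)·g(q) + f(q)·∂ᵣg/∂q^{μ*}(q). -/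
open Quaternion Filter Topology Asymptotics

noncomputable section

/-!
Apply the Fréchet product rule `D(fg)(v) = Df(v) g + f Dg(v)` in each of the four directions.
The `Df(v) g` terms factor to `∂ᵣf · g` on the right; in the `f Dg(v)` terms the value `f(q)`
must pass the rotated units `μ e μ⁻¹` multiplying from the left, which it can since it is real,
hence central in `ℍ`.
-/

theorem fderiv_fun_mul_apply {𝕜 E 𝔸 : Type*} [NontriviallyNormedField 𝕜] [NormedAddCommGroup E]
    [NormedSpace 𝕜 E] [NormedRing 𝔸] [NormedAlgebra 𝕜 𝔸] {a b : E → 𝔸} {x : E}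
    (ha : DifferentiableAt 𝕜 a x) (hb : DifferentiableAt 𝕜 b x) (v : E) :
    fderiv 𝕜 (fun y => a y * b y) x v = fderiv 𝕜 a x v * b x + a x * fderiv 𝕜 b x v := by
  rw [fderiv_fun_mul' ha hb, add_comm]
  rfl

section
variable {F g : ℍ[ℝ] → ℍ[ℝ]} {q : ℍ[ℝ]}

theorem rD_mul_of_forall_commute (hF : DifferentiableAt ℝ F q) (hg : DifferentiableAt ℝ g q)
    (hFq : ∀ x, Commute (F q) x) (μ : ℍ[ℝ]) :
    rD (fun p => F p * g p) μ q = rD F μ q * g q + F q * rD g μ q := by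
  have hmove : ∀ x y, F q * (x * y) = x * (F q * y) := fun x y => (hFq x).left_comm y
  simp only [rD, fderiv_fun_mul_apply hF hg, mul_sub, hmove]
  noncomm_ring

theorem rDc_mul_of_forall_commute (hF : DifferentiableAt ℝ F q) (hg : DifferentiableAt ℝ g q)
    (hFq : ∀ x, Commute (F q) x) (μ : ℍ[ℝ]) :
    rDc (fun p => F p * g p) μ q = rDc F μ q * g q + F q * rDc g μ q := by
  have hmove : ∀ x y, F q * (x * y) = x * (F q * y) := fun x y => (hFq x).left_comm y
  simp only [rDc, fderiv_fun_mul_apply hF hg, mul_add, hmove]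
  noncomm_ring

end

theorem right_GHR_product_rule_real_factor_general
    (f : ℍ[ℝ] → ℝ) (g : ℍ[ℝ] → ℍ[ℝ]) (q μ : ℍ[ℝ])
    (hf : DifferentiableAt ℝ (fun p => ((f p : ℝ) : ℍ[ℝ])) q)
    (hg : DifferentiableAt ℝ g q) :
    rD (fun p => ((f p : ℝ) : ℍ[ℝ]) * g p) μ q
      = rD (fun p => ((f p : ℝ) : ℍ[ℝ])) μ q * g q + ((f q : ℝ) : ℍ[ℝ]) * rD g μ q ∧
    rDc (fun p => ((f p : ℝ) : ℍ[ℝ]) * g p) μ q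
      = rDc (fun p => ((f p : ℝ) : ℍ[ℝ])) μ q * g q + ((f q : ℝ) : ℍ[ℝ]) * rDc g μ q :=
  ⟨rD_mul_of_forall_commute hf hg (Quaternion.coe_commute (f q)) μ,
    rDc_mul_of_forall_commute hf hg (Quaternion.coe_commute (f q)) μ⟩

theorem right_GHR_product_rule_real_factor
    (f : ℍ[ℝ] → ℝ) (g : ℍ[ℝ] → ℍ[ℝ]) (q μ : ℍ[ℝ])
    (hf : DifferentiableAt ℝ (fun p => ((f p : ℝ) : ℍ[ℝ])) q)
    (hg : DifferentiableAt ℝ g q) (hμ : μ ≠ 0) :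
    rD (fun p => ((f p : ℝ) : ℍ[ℝ]) * g p) μ q
      = rD (fun p => ((f p : ℝ) : ℍ[ℝ])) μ q * g q + ((f q : ℝ) : ℍ[ℝ]) * rD g μ q ∧
    rDc (fun p => ((f p : ℝ) : ℍ[ℝ]) * g p) μ q
      = rDc (fun p => ((f p : ℝ) : ℍ[ℝ])) μ q * g q + ((f q : ℝ) : ℍ[ℝ]) * rDc g μ q :=
  right_GHR_product_rule_real_factor_general f g q μ hf hg

end
end

section
/- Let g : ℍ → ℍ be real-(Fréchet-)differentiable at q ∈ ℍ, let f : ℍ → ℍ be real-(Fréchet-)differentiable at g(q), and let μ, ν ∈ ℍ be nonzero. Then the composite f ∘ g is real-differentiable at q and its left GHR derivative satisfies the chain rule ∂(f∘g)/∂q^μ(q) = Σ_{η ∈ {1,i,j,k}} (∂f/∂p^{νη})(g(q)) · ∂(g^{νη})/∂q^μ(q), where g^{νη} denotes the function p ↦ (νη) g(p) (νη)⁻¹ and (∂f/∂p^{νη})(g(q)) is the left GHR derivative of f at the point g(q) with respect to the nonzero quaternion νη. The analogous identity holds for ∂(f∘g)/∂q^{μ*}(q) with each ∂(g^{νη})/∂q^μ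 replaced by ∂(g^{νη})/∂q^{μ*}. -/
open Quaternion Filter Topology Asymptotics

noncomputable section

lemma qI_inv : qI⁻¹ = -qI := inv_eq_of_mul_eq_one_right (by ext <;> simp)
lemma qJ_inv : qJ⁻¹ = -qJ := inv_eq_of_mul_eq_one_right (by ext <;> simp)
lemma qK_inv : qK⁻¹ = -qK := inv_eq_of_mul_eq_one_right (by ext <;> simp)

lemma qRot_mul_qRot {c : ℍ[ℝ]} (hc : c ≠ 0) (x y : ℍ[ℝ]) :
    qRot c x * qRot c y = qRot c (x * y) := by
  simp [qRot, mul_assoc, inv_mul_cancel_left₀ hc]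

lemma qRot_mul_s9 (c d x : ℍ[ℝ]) : qRot (c * d) x = qRot c (qRot d x) := by
  simp [qRot, mul_inv_rev, mul_assoc]

lemma qRot_add (c x y : ℍ[ℝ]) : qRot c (x + y) = qRot c x + qRot c y := by
  simp [qRot, mul_add, add_mul]

lemma qRot_coe {c : ℍ[ℝ]} (hc : c ≠ 0) (r : ℝ) : qRot c r = r := by
  rw [qRot, ← Quaternion.coe_commutes, mul_assoc, mul_inv_cancel₀ hc, mul_one]

lemma sum_qRot_basis (y : ℍ[ℝ]) :
    qRot 1 y + qRot qI y + qRot qJ y + qRot qK y = ((4 * y.re : ℝ) : ℍ[ℝ]) := by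
  simp only [qRot, qI_inv, qJ_inv, qK_inv, inv_one]
  ext <;> simp
  ring

lemma sum_qRot_mul_basis {ν : ℍ[ℝ]} (hν : ν ≠ 0) (y : ℍ[ℝ]) :
    qRot (ν * 1) y + qRot (ν * qI) y + qRot (ν * qJ) y + qRot (ν * qK) y
      = ((4 * y.re : ℝ) : ℍ[ℝ]) := by
  simp only [qRot_mul_s9, ← qRot_add, sum_qRot_basis, qRot_coe hν]

def ghrComb (φ ρ : ℍ[ℝ] → ℍ[ℝ]) : ℍ[ℝ] :=
  (4 : ℍ[ℝ])⁻¹ * (φ 1 - φ qI * ρ qI - φ qJ * ρ qJ - φ qK * ρ qK)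

lemma lD_eq_ghrComb (f : ℍ[ℝ] → ℍ[ℝ]) (μ q : ℍ[ℝ]) :
    lD f μ q = ghrComb (fderiv ℝ f q) (qRot μ) := rfl

lemma lDc_eq_ghrComb (f : ℍ[ℝ] → ℍ[ℝ]) (μ q : ℍ[ℝ]) :
    lDc f μ q = ghrComb (fderiv ℝ f q) (-qRot μ) := by
  simp only [lDc, ghrComb, Pi.neg_apply, mul_neg, sub_neg_eq_add]

lemma ghrComb_add (φ ψ ρ : ℍ[ℝ] → ℍ[ℝ]) :
    ghrComb (fun x => φ x + ψ x) ρ = ghrComb φ ρ + ghrComb ψ ρ := by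
  simp only [ghrComb]; noncomm_ring

lemma ghrComb_const_mul (a : ℍ[ℝ]) (φ ρ : ℍ[ℝ] → ℍ[ℝ]) :
    ghrComb (fun x => a * φ x) ρ = a * ghrComb φ ρ := by
  have h4 : (4 : ℍ[ℝ])⁻¹ * a = a * 4⁻¹ := (Commute.ofNat_left 4 a).inv_left₀.eq
  simp only [ghrComb]
  rw [← mul_assoc, ← h4, mul_assoc]
  noncomm_ring

lemma ghrComb_qRot_mul_qRot (φ : ℍ[ℝ] → ℍ[ℝ]) {c : ℍ[ℝ]} (hc : c ≠ 0) (x : ℍ[ℝ]) :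
    ghrComb φ (qRot c) * qRot c x
      = (4 : ℍ[ℝ])⁻¹ * (φ 1 * qRot c x - φ qI * qRot c (qI * x) - φ qJ * qRot c (qJ * x)
          - φ qK * qRot c (qK * x)) := by
  simp only [ghrComb, ← qRot_mul_qRot hc]; noncomm_ring

theorem linearMap_eq_sum_ghrComb_mul_qRot (A : ℍ[ℝ] →ₗ[ℝ] ℍ[ℝ]) {ν : ℍ[ℝ]} (hν : ν ≠ 0)
    (x : ℍ[ℝ]) :
    A x = ghrComb A (qRot (ν * 1)) * qRot (ν * 1) x + ghrComb A (qRot (ν * qI)) * qRot (ν * qI) x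
      + ghrComb A (qRot (ν * qJ)) * qRot (ν * qJ) x
      + ghrComb A (qRot (ν * qK)) * qRot (ν * qK) x := by
  have hc : ∀ η : ℍ[ℝ], η ≠ 0 → ν * η ≠ 0 := fun η => mul_ne_zero hν
  rw [ghrComb_qRot_mul_qRot _ (hc 1 one_ne_zero),
    ghrComb_qRot_mul_qRot _ (hc qI (by simp [Quaternion.ext_iff])),
    ghrComb_qRot_mul_qRot _ (hc qJ (by simp [Quaternion.ext_iff])),
    ghrComb_qRot_mul_qRot _ (hc qK (by simp [Quaternion.ext_iff]))]
  calc A x = x.re • A 1 + x.imI • A qI + x.imJ • A qJ + x.imK • A qK := by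
        rw [← map_smul, ← map_smul, ← map_smul, ← map_smul, ← map_add, ← map_add, ← map_add]
        congr 1; ext <;> simp
    _ = (4 : ℍ[ℝ])⁻¹ * (A 1 * ((4 * x.re : ℝ) : ℍ[ℝ]) - A qI * ((4 * (qI * x).re : ℝ) : ℍ[ℝ])
          - A qJ * ((4 * (qJ * x).re : ℝ) : ℍ[ℝ]) - A qK * ((4 * (qK * x).re : ℝ) : ℍ[ℝ])) := by
        have h4 : (4 : ℍ[ℝ])⁻¹ = ((4⁻¹ : ℝ) : ℍ[ℝ]) := by rw [coe_inv]; rfl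
        simp only [re_mul, qI_re, qI_imI, qI_imJ, qI_imK, qJ_re, qJ_imI, qJ_imJ, qJ_imK, qK_re, qK_imI,
          qK_imJ, qK_imK, mul_coe_eq_smul, h4, coe_mul_eq_smul]
        module
    _ = _ := by
        simp only [← sum_qRot_mul_basis hν]
        noncomm_ring

theorem ghrComb_linearMap_comp (A : ℍ[ℝ] →ₗ[ℝ] ℍ[ℝ]) (B ρ : ℍ[ℝ] → ℍ[ℝ]) {ν : ℍ[ℝ]} (hν : ν ≠ 0) :
    ghrComb (A ∘ B) ρ
      = ghrComb A (qRot (ν * 1)) * ghrComb (fun x => qRot (ν * 1) (B x)) ρ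
        + ghrComb A (qRot (ν * qI)) * ghrComb (fun x => qRot (ν * qI) (B x)) ρ
        + ghrComb A (qRot (ν * qJ)) * ghrComb (fun x => qRot (ν * qJ) (B x)) ρ
        + ghrComb A (qRot (ν * qK)) * ghrComb (fun x => qRot (ν * qK) (B x)) ρ := by
  have hAB : A ∘ B = fun x => ghrComb A (qRot (ν * 1)) * qRot (ν * 1) (B x)
      + ghrComb A (qRot (ν * qI)) * qRot (ν * qI) (B x)
      + ghrComb A (qRot (ν * qJ)) * qRot (ν * qJ) (B x)
      + ghrComb A (qRot (ν * qK)) * qRot (ν * qK) (B x) :=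
    funext fun x => linearMap_eq_sum_ghrComb_mul_qRot A hν (B x)
  simp only [hAB, ghrComb_add, ghrComb_const_mul]

lemma coe_fderiv_qRot_comp {g : ℍ[ℝ] → ℍ[ℝ]} {q : ℍ[ℝ]} (hg : DifferentiableAt ℝ g q) (c : ℍ[ℝ]) :
    ⇑(fderiv ℝ (fun p => qRot c (g p)) q) = fun x => qRot c (fderiv ℝ g q x) := by
  unfold qRot
  rw [((hg.hasFDerivAt.const_mul c).mul_const' c⁻¹).fderiv]
  rfl

theorem left_GHR_chain_rule_general
    (f g : ℍ[ℝ] → ℍ[ℝ]) (q μ ν : ℍ[ℝ])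
    (hg : DifferentiableAt ℝ g q) (hf : DifferentiableAt ℝ f (g q))
    (hν : ν ≠ 0) :
    DifferentiableAt ℝ (f ∘ g) q ∧
    lD (f ∘ g) μ q
      = lD f (ν * 1) (g q) * lD (fun p => qRot (ν * 1) (g p)) μ q
        + lD f (ν * qI) (g q) * lD (fun p => qRot (ν * qI) (g p)) μ q
        + lD f (ν * qJ) (g q) * lD (fun p => qRot (ν * qJ) (g p)) μ q
        + lD f (ν * qK) (g q) * lD (fun p => qRot (ν * qK) (g p)) μ q ∧
    lDc (f ∘ g) μ q
      = lD f (ν * 1) (g q) * lDc (fun p => qRot (ν * 1) (g p)) μ q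
        + lD f (ν * qI) (g q) * lDc (fun p => qRot (ν * qI) (g p)) μ q
        + lD f (ν * qJ) (g q) * lDc (fun p => qRot (ν * qJ) (g p)) μ q
        + lD f (ν * qK) (g q) * lDc (fun p => qRot (ν * qK) (g p)) μ q := by
  have hfg : ⇑(fderiv ℝ (f ∘ g) q) = fderiv ℝ f (g q) ∘ fderiv ℝ g q := by
    rw [fderiv_comp q hf hg, ContinuousLinearMap.coe_comp]
  refine ⟨hf.comp q hg, ?_, ?_⟩
  · simp only [lD_eq_ghrComb, hfg, coe_fderiv_qRot_comp hg]
    exact ghrComb_linearMap_comp (fderiv ℝ f (g q)) _ _ hν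
  · simp only [lD_eq_ghrComb, lDc_eq_ghrComb, hfg, coe_fderiv_qRot_comp hg]
    exact ghrComb_linearMap_comp (fderiv ℝ f (g q)) _ _ hν

theorem left_GHR_chain_rule
    (f g : ℍ[ℝ] → ℍ[ℝ]) (q μ ν : ℍ[ℝ])
    (hg : DifferentiableAt ℝ g q) (hf : DifferentiableAt ℝ f (g q))
    (hμ : μ ≠ 0) (hν : ν ≠ 0) :
    DifferentiableAt ℝ (f ∘ g) q ∧
    lD (f ∘ g) μ q
      = lD f (ν * 1) (g q) * lD (fun p => qRot (ν * 1) (g p)) μ q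
        + lD f (ν * qI) (g q) * lD (fun p => qRot (ν * qI) (g p)) μ q
        + lD f (ν * qJ) (g q) * lD (fun p => qRot (ν * qJ) (g p)) μ q
        + lD f (ν * qK) (g q) * lD (fun p => qRot (ν * qK) (g p)) μ q ∧
    lDc (f ∘ g) μ q
      = lD f (ν * 1) (g q) * lDc (fun p => qRot (ν * 1) (g p)) μ q
        + lD f (ν * qI) (g q) * lDc (fun p => qRot (ν * qI) (g p)) μ q
        + lD f (ν * qJ) (g q) * lDc (fun p => qRot (ν * qJ) (g p)) μ q
        + lD f (ν * qK) (g q) * lDc (fun p => qRot (ν * qK) (g p)) μ q :=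
  left_GHR_chain_rule_general f g q μ ν hg hf hν

end
end

section
/- Let g : ℍ → ℝ (regarded as the real-valued quaternion function q ↦ (g(q) : ℍ)) be real-(Fréchet-)differentiable at q ∈ ℍ, let f : ℝ → ℝ be differentiable at g(q), and let μ ∈ ℍ be nonzero. Then the composite q ↦ (f(g(q)) : ℍ) satisfies ∂(f∘g)/∂q^μ(q) = f'(g(q)) · ∂g/∂q^μ(q) and ∂(f∘g)/∂q^{μ*}(q) = f'(g(q)) · ∂g/∂q^{μ*}(q). -/
/-! By the real chain rule every directional derivative of `q ↦ f (g q)` is `f' (g q)` times the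
corresponding one of `g`. The GHR derivatives combine directional derivatives by right
multiplications and the central factor `1/4` only, so a common left factor passes through them. -/

open Quaternion Filter Topology Asymptotics

noncomputable section

section

variable {E : Type*} [NormedAddCommGroup E] [NormedSpace ℝ E]

theorem DifferentiableAt.of_quaternion_coe {g : E → ℝ} {q : E}
    (hg : DifferentiableAt ℝ (fun p => (g p : ℍ[ℝ])) q) : DifferentiableAt ℝ g q :=
  (LinearMap.toContinuousLinearMap (QuaternionAlgebra.reₗ _ _ _) : ℍ[ℝ] →L[ℝ] ℝ)
    |>.differentiableAt.comp q hg

theorem fderiv_quaternion_coe_apply {g : E → ℝ} {q : E} (hg : DifferentiableAt ℝ g q) (v : E) :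
    fderiv ℝ (fun p => (g p : ℍ[ℝ])) q v = (fderiv ℝ g q v : ℍ[ℝ]) :=
  congrArg (· v) ((Algebra.linearMap ℝ ℍ[ℝ]).toContinuousLinearMap.hasFDerivAt.comp q
    hg.hasFDerivAt).fderiv

theorem fderiv_quaternion_coe_comp_apply {g : E → ℝ} {f : ℝ → ℝ} {q : E}
    (hg : DifferentiableAt ℝ g q) (hf : DifferentiableAt ℝ f (g q)) (v : E) :
    fderiv ℝ (fun p => (f (g p) : ℍ[ℝ])) q v
      = ((deriv f (g q) : ℝ) : ℍ[ℝ]) * fderiv ℝ (fun p => (g p : ℍ[ℝ])) q v := by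
  have hfg : HasFDerivAt (fun p => f (g p)) (deriv f (g q) • fderiv ℝ g q) q :=
    hf.hasDerivAt.comp_hasFDerivAt q hg.hasFDerivAt
  rw [fderiv_quaternion_coe_apply hfg.differentiableAt, fderiv_quaternion_coe_apply hg, hfg.fderiv,
    smul_apply, smul_eq_mul, coe_mul]

end

theorem lD_eq_mul_of_fderiv_eq_mul {F G : ℍ[ℝ] → ℍ[ℝ]} {q : ℍ[ℝ]} (c μ : ℍ[ℝ])
    (h : ∀ v, fderiv ℝ F q v = c * fderiv ℝ G q v) : lD F μ q = c * lD G μ q := by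
  simp only [lD, h, mul_assoc, ← mul_sub]
  rw [← mul_assoc, ← mul_assoc, ((Commute.ofNat_right c 4).inv_right₀).eq]

theorem lDc_eq_mul_of_fderiv_eq_mul {F G : ℍ[ℝ] → ℍ[ℝ]} {q : ℍ[ℝ]} (c μ : ℍ[ℝ])
    (h : ∀ v, fderiv ℝ F q v = c * fderiv ℝ G q v) : lDc F μ q = c * lDc G μ q := by
  simp only [lDc, h, mul_assoc, ← mul_add]
  rw [← mul_assoc, ← mul_assoc, ((Commute.ofNat_right c 4).inv_right₀).eq]

theorem left_GHR_chain_rule_real_composition_general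
    (g : ℍ[ℝ] → ℝ) (f : ℝ → ℝ) (q μ : ℍ[ℝ])
    (hg : DifferentiableAt ℝ (fun p => ((g p : ℝ) : ℍ[ℝ])) q)
    (hf : DifferentiableAt ℝ f (g q)) :
    lD (fun p => ((f (g p) : ℝ) : ℍ[ℝ])) μ q
      = ((deriv f (g q) : ℝ) : ℍ[ℝ]) * lD (fun p => ((g p : ℝ) : ℍ[ℝ])) μ q ∧
    lDc (fun p => ((f (g p) : ℝ) : ℍ[ℝ])) μ q
      = ((deriv f (g q) : ℝ) : ℍ[ℝ]) * lDc (fun p => ((g p : ℝ) : ℍ[ℝ])) μ q :=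
  have hchain := fderiv_quaternion_coe_comp_apply hg.of_quaternion_coe hf
  ⟨lD_eq_mul_of_fderiv_eq_mul _ μ hchain, lDc_eq_mul_of_fderiv_eq_mul _ μ hchain⟩

theorem left_GHR_chain_rule_real_composition
    (g : ℍ[ℝ] → ℝ) (f : ℝ → ℝ) (q μ : ℍ[ℝ])
    (hg : DifferentiableAt ℝ (fun p => ((g p : ℝ) : ℍ[ℝ])) q)
    (hf : DifferentiableAt ℝ f (g q)) (hμ : μ ≠ 0) :
    lD (fun p => ((f (g p) : ℝ) : ℍ[ℝ])) μ q
      = ((deriv f (g q) : ℝ) : ℍ[ℝ]) * lD (fun p => ((g p : ℝ) : ℍ[ℝ])) μ q ∧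
    lDc (fun p => ((f (g p) : ℝ) : ℍ[ℝ])) μ q
      = ((deriv f (g q) : ℝ) : ℍ[ℝ]) * lDc (fun p => ((g p : ℝ) : ℍ[ℝ])) μ q :=
  left_GHR_chain_rule_real_composition_general g f q μ hg hf

end
end

section
/- Let f : ℍ → ℝ (regarded as the real-valued quaternion function q ↦ (f(q) : ℍ)) be continuously real-differentiable on an open set U ⊆ ℍ, and let q₀, q₁ ∈ U be such that the segment joining q₀ and q₁ is contained in U. Set λ := q₁ − q₀. Then f(q₁) − f(q₀) = 4 ∫₀¹ Re((∂f/∂q)(q₀ + t λ) · λ) dt = 4 ∫₀¹ Re((∂f/∂q^*)(q₀ + t λ) · λ*) dt. -/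
open Quaternion Filter Topology Asymptotics

noncomputable section

/-!
Because `f` is real-valued, every directional derivative of `q ↦ (f q : ℍ)` is real, and
expanding `λ` in the basis `1, i, j, k` gives
`Re((∂f/∂q)(q) λ) = Re((∂f/∂q*)(q) λ*) = ¼ Df(q) λ`.
Both identities are therefore the fundamental theorem of calculus for `f` along the segment.
-/

lemma qRot_one_s13 (p : ℍ[ℝ]) : qRot 1 p = p := by simp [qRot]

namespace Quaternion

def reCLM : ℍ[ℝ] →L[ℝ] ℝ :=
  LinearMap.toContinuousLinearMap (QuaternionAlgebra.reₗ (-1) 0 (-1))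

lemma map_eq_re_smul_add_im_smul {M F : Type*} [AddCommGroup M] [Module ℝ M]
    [FunLike F ℍ[ℝ] M] [LinearMapClass F ℝ ℍ[ℝ] M] (L : F) (p : ℍ[ℝ]) :
    L p = p.re • L 1 + p.imI • L qI + p.imJ • L qJ + p.imK • L qK := by
  have hp : p = p.re • (1 : ℍ[ℝ]) + p.imI • qI + p.imJ • qJ + p.imK • qK := by
    ext <;> simp only [re_add, imI_add, imJ_add, imK_add, re_smul, imI_smul, imJ_smul, imK_smul,
      re_one, imI_one, imJ_one, imK_one, smul_eq_mul] <;> simp [qI, qJ, qK]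
  conv_lhs => rw [hp]
  simp only [map_add, map_smul]

lemma re_coe_sub_mul (a b c d : ℝ) (p : ℍ[ℝ]) :
    (((a : ℍ[ℝ]) - b * qI - c * qJ - d * qK) * p).re
      = p.re * a + p.imI * b + p.imJ * c + p.imK * d := by
  simp only [coe_mul_eq_smul, re_mul, re_sub, re_coe, re_smul, smul_eq_mul, imI_sub, imI_coe,
    imI_smul, imJ_sub, imJ_coe, imJ_smul, imK_sub, imK_coe, imK_smul]
  simp [qI, qJ, qK]
  ring

lemma re_coe_add_mul_star (a b c d : ℝ) (p : ℍ[ℝ]) :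
    (((a : ℍ[ℝ]) + b * qI + c * qJ + d * qK) * star p).re
      = p.re * a + p.imI * b + p.imJ * c + p.imK * d := by
  simp only [coe_mul_eq_smul, re_mul, re_add, re_coe, re_smul, smul_eq_mul, re_star, imI_add,
    imI_coe, imI_smul, imI_star, imJ_add, imJ_coe, imJ_smul, imJ_star, imK_add, imK_coe, imK_smul,
    imK_star]
  simp [qI, qJ, qK]
  ring

lemma re_inv_four_mul (p : ℍ[ℝ]) : ((4 : ℍ[ℝ])⁻¹ * p).re = 4⁻¹ * p.re := by
  have h4 : (4 : ℍ[ℝ])⁻¹ = ((4⁻¹ : ℝ) : ℍ[ℝ]) := by push_cast; rfl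
  rw [h4, coe_mul_eq_smul, re_smul, smul_eq_mul]

variable {E : Type*} [NormedAddCommGroup E] [NormedSpace ℝ E]

lemma differentiableAt_coe_comp_iff {f : E → ℝ} {x : E} :
    DifferentiableAt ℝ (fun y => (f y : ℍ[ℝ])) x ↔ DifferentiableAt ℝ f x :=
  ⟨fun h => reCLM.differentiableAt.comp x h,
    fun h => (algebraMapCLM ℝ ℍ[ℝ]).differentiableAt.comp x h⟩

lemma fderiv_coe_comp (f : E → ℝ) (x v : E) :
    fderiv ℝ (fun y => (f y : ℍ[ℝ])) x v = fderiv ℝ f x v := by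
  by_cases hf : DifferentiableAt ℝ f x
  · have hF : HasFDerivAt (fun y => (f y : ℍ[ℝ]))
        ((algebraMapCLM ℝ ℍ[ℝ]).comp (fderiv ℝ f x)) x :=
      (algebraMapCLM ℝ ℍ[ℝ]).hasFDerivAt.comp x hf.hasFDerivAt
    rw [hF.fderiv]
    simp
  · rw [fderiv_zero_of_not_differentiableAt hf,
      fderiv_zero_of_not_differentiableAt (mt differentiableAt_coe_comp_iff.1 hf)]
    simp

end Quaternion

lemma ContDiffOn.of_quaternion_coe {E : Type*} [NormedAddCommGroup E] [NormedSpace ℝ E]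
    {n : WithTop ℕ∞} {f : E → ℝ} {U : Set E} (hf : ContDiffOn ℝ n (fun y => (f y : ℍ[ℝ])) U) :
    ContDiffOn ℝ n f U :=
  Quaternion.reCLM.contDiff.comp_contDiffOn hf

lemma re_lD_one_coe_mul (f : ℍ[ℝ] → ℝ) (q p : ℍ[ℝ]) :
    (lD (fun y => (f y : ℍ[ℝ])) 1 q * p).re = 4⁻¹ * fderiv ℝ f q p := by
  rw [Quaternion.map_eq_re_smul_add_im_smul (fderiv ℝ f q) p, lD, mul_assoc,
    Quaternion.re_inv_four_mul]
  simp only [qRot_one_s13, Quaternion.fderiv_coe_comp, Quaternion.re_coe_sub_mul, smul_eq_mul]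

lemma re_lDc_one_coe_mul_star (f : ℍ[ℝ] → ℝ) (q p : ℍ[ℝ]) :
    (lDc (fun y => (f y : ℍ[ℝ])) 1 q * star p).re = 4⁻¹ * fderiv ℝ f q p := by
  rw [Quaternion.map_eq_re_smul_add_im_smul (fderiv ℝ f q) p, lDc, mul_assoc,
    Quaternion.re_inv_four_mul]
  simp only [qRot_one_s13, Quaternion.fderiv_coe_comp, Quaternion.re_coe_add_mul_star, smul_eq_mul]

theorem sub_eq_integral_fderiv_segment {E F : Type*} [NormedAddCommGroup E] [NormedSpace ℝ E]
    [NormedAddCommGroup F] [NormedSpace ℝ F] [CompleteSpace F] {f : E → F} {U : Set E}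
    (hU : IsOpen U) (hf : ContDiffOn ℝ 1 f U) {a b : E} (hab : segment ℝ a b ⊆ U) :
    f b - f a = ∫ t in (0 : ℝ)..1, fderiv ℝ f (a + t • (b - a)) (b - a) := by
  have hmem : ∀ t ∈ Set.uIcc (0 : ℝ) 1, a + t • (b - a) ∈ U := fun t ht => by
    rw [Set.uIcc_of_le zero_le_one] at ht
    exact hab (segment_eq_image' ℝ a b ▸ ⟨t, ht, rfl⟩)
  have hderiv : ∀ t ∈ Set.uIcc (0 : ℝ) 1,
      HasDerivAt (fun t : ℝ => f (a + t • (b - a))) (fderiv ℝ f (a + t • (b - a)) (b - a)) t := by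
    intro t ht
    have hline : HasDerivAt (fun t : ℝ => a + t • (b - a)) (b - a) t := by
      simpa using ((hasDerivAt_id t).smul_const (b - a)).const_add a
    exact ((hf.differentiableOn one_ne_zero).differentiableAt
      (hU.mem_nhds (hmem t ht))).hasFDerivAt.comp_hasDerivAt t hline
  have hcont : ContinuousOn (fun t : ℝ => fderiv ℝ f (a + t • (b - a)) (b - a))
      (Set.uIcc (0 : ℝ) 1) :=
    ((hf.continuousOn_fderiv_of_isOpen hU le_rfl).comp (by fun_prop) hmem).clm_apply
      continuousOn_const
  rw [intervalIntegral.integral_eq_sub_of_hasDerivAt hderiv hcont.intervalIntegrable]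
  simp

theorem mean_value_theorem_real_valued_general
    (f : ℍ[ℝ] → ℝ) (U : Set ℍ[ℝ]) (hU : IsOpen U)
    (hf : ContDiffOn ℝ 1 (fun p => ((f p : ℝ) : ℍ[ℝ])) U)
    (q₀ q₁ : ℍ[ℝ])
    (hseg : segment ℝ q₀ q₁ ⊆ U) :
    (f q₁ - f q₀ = 4 * ∫ t in (0:ℝ)..1,
        (lD (fun p => ((f p : ℝ) : ℍ[ℝ])) 1 (q₀ + t • (q₁ - q₀)) * (q₁ - q₀)).re) ∧
    (f q₁ - f q₀ = 4 * ∫ t in (0:ℝ)..1,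
        (lDc (fun p => ((f p : ℝ) : ℍ[ℝ])) 1 (q₀ + t • (q₁ - q₀)) * star (q₁ - q₀)).re) := by
  simp only [re_lD_one_coe_mul, re_lDc_one_coe_mul_star, intervalIntegral.integral_const_mul,
    ← sub_eq_integral_fderiv_segment hU hf.of_quaternion_coe hseg]
  constructor <;> ring

theorem mean_value_theorem_real_valued
    (f : ℍ[ℝ] → ℝ) (U : Set ℍ[ℝ]) (hU : IsOpen U)
    (hf : ContDiffOn ℝ 1 (fun p => ((f p : ℝ) : ℍ[ℝ])) U)
    (q₀ q₁ : ℍ[ℝ]) (hq₀ : q₀ ∈ U) (hq₁ : q₁ ∈ U)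
    (hseg : segment ℝ q₀ q₁ ⊆ U) :
    (f q₁ - f q₀ = 4 * ∫ t in (0:ℝ)..1,
        (lD (fun p => ((f p : ℝ) : ℍ[ℝ])) 1 (q₀ + t • (q₁ - q₀)) * (q₁ - q₀)).re) ∧
    (f q₁ - f q₀ = 4 * ∫ t in (0:ℝ)..1,
        (lDc (fun p => ((f p : ℝ) : ℍ[ℝ])) 1 (q₀ + t • (q₁ - q₀)) * star (q₁ - q₀)).re) :=
  mean_value_theorem_real_valued_general f U hU hf q₀ q₁ hseg

end
end

section
/- Let f : ℍ → ℍ be twice continuously real-differentiable on an open set containing q, and let μ ∈ ℍ be nonzero. Then 16 times the left GHR derivative with respect to μ, taken at q, of the function p ↦ (∂f/∂p^{μ*})(p) equals the Laplacian D₁(D₁f)(q) + Dᵢ(Dᵢf)(q) + Dⱼ(Dⱼf)(q) + Dₖ(Dₖf)(q), and the same holds with the two GHR derivatives taken in the opposite order (16·∂/∂q^{μ*}(∂f/∂q^μ) at q equals the same Laplacian). -/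
open Quaternion Filter Topology Asymptotics

noncomputable section

/-!
With `a = μ i μ⁻¹`, `b = μ j μ⁻¹`, `c = μ k μ⁻¹`, both GHR derivatives are
`¼ (D₁f + Dᵢf·ε₁ + Dⱼf·ε₂ + Dₖf·ε₃)` with `ε = (a, b, c)` for `∂/∂q^{μ*}` and `ε = (-a, -b, -c)`
for `∂/∂q^μ`. Conjugation by `μ` is a ring automorphism, so `a, b, c` are, like `i, j, k`,
pairwise anticommuting square roots of `-1`. Composing the two operators, the diagonal terms
`D_v D_v f · ε_v · (-ε_v) = D_v D_v f` add up to the Laplacian, while the mixed terms cancel in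
pairs by the symmetry of the second derivative and anticommutation.
-/

theorem fderiv_fderiv_apply {𝕜 E F : Type*} [NontriviallyNormedField 𝕜]
    [NormedAddCommGroup E] [NormedSpace 𝕜 E] [NormedAddCommGroup F] [NormedSpace 𝕜 F]
    {f : E → F} {x : E} (hf : DifferentiableAt 𝕜 (fderiv 𝕜 f) x) (v w : E) :
    fderiv 𝕜 (fun y => fderiv 𝕜 f y v) x w = fderiv 𝕜 (fderiv 𝕜 f) x w v := by
  simp [fderiv_clm_apply hf (differentiableAt_const v)]

structure IsCliffordTriple {R : Type*} [Ring R] (a b c : R) : Prop where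
  a_mul_a : a * a = -1
  b_mul_b : b * b = -1
  c_mul_c : c * c = -1
  b_mul_a : b * a = -(a * b)
  c_mul_b : c * b = -(b * c)
  a_mul_c : a * c = -(c * a)

namespace IsCliffordTriple

variable {R : Type*} [Ring R] {a b c : R}

theorem neg (h : IsCliffordTriple a b c) : IsCliffordTriple (-a) (-b) (-c) where
  a_mul_a := by rw [neg_mul_neg, h.a_mul_a]
  b_mul_b := by rw [neg_mul_neg, h.b_mul_b]
  c_mul_c := by rw [neg_mul_neg, h.c_mul_c]
  b_mul_a := by rw [neg_mul_neg, neg_mul_neg, h.b_mul_a]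
  c_mul_b := by rw [neg_mul_neg, neg_mul_neg, h.c_mul_b]
  a_mul_c := by rw [neg_mul_neg, neg_mul_neg, h.a_mul_c]

theorem map {S : Type*} [Ring S] (h : IsCliffordTriple a b c) (φ : R →+* S) :
    IsCliffordTriple (φ a) (φ b) (φ c) where
  a_mul_a := by rw [← map_mul, h.a_mul_a, map_neg, map_one]
  b_mul_b := by rw [← map_mul, h.b_mul_b, map_neg, map_one]
  c_mul_c := by rw [← map_mul, h.c_mul_c, map_neg, map_one]
  b_mul_a := by rw [← map_mul, h.b_mul_a, map_neg, map_mul]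
  c_mul_b := by rw [← map_mul, h.c_mul_b, map_neg, map_mul]
  a_mul_c := by rw [← map_mul, h.a_mul_c, map_neg, map_mul]

end IsCliffordTriple

theorem isCliffordTriple_qI_qJ_qK : IsCliffordTriple qI qJ qK := by
  constructor <;> ext <;> simp <;> simp [qI, qJ, qK]

theorem isCliffordTriple_qRot {μ : ℍ[ℝ]} (hμ : μ ≠ 0) :
    IsCliffordTriple (qRot μ qI) (qRot μ qJ) (qRot μ qK) := by
  have hconj (p : ℍ[ℝ]) :
      qRot μ p = MulSemiringAction.toRingHom _ _ (ConjAct.toConjAct (Units.mk0 μ hμ)) p := by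
    simp [qRot, ConjAct.units_smul_def]
  simpa only [hconj] using isCliffordTriple_qI_qJ_qK.map _

def ghrSum (a b c : ℍ[ℝ]) (L : ℍ[ℝ] → ℍ[ℝ]) : ℍ[ℝ] :=
  L 1 + L qI * a + L qJ * b + L qK * c

theorem ghrSum_smul (a b c : ℍ[ℝ]) (r : ℝ) (L : ℍ[ℝ] → ℍ[ℝ]) :
    ghrSum a b c (fun v => r • L v) = r • ghrSum a b c L := by
  simp only [ghrSum, smul_mul_assoc, smul_add]

def ghrDeriv (a b c : ℍ[ℝ]) (f : ℍ[ℝ] → ℍ[ℝ]) (p : ℍ[ℝ]) : ℍ[ℝ] :=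
  (4⁻¹ : ℝ) • ghrSum a b c (fderiv ℝ f p)

theorem inv_four_mul_eq_smul (x : ℍ[ℝ]) : (4 : ℍ[ℝ])⁻¹ * x = (4⁻¹ : ℝ) • x := by
  rw [Algebra.smul_def, map_inv₀, map_ofNat]

theorem lDc_eq_ghrDeriv (f : ℍ[ℝ] → ℍ[ℝ]) (μ : ℍ[ℝ]) :
    lDc f μ = ghrDeriv (qRot μ qI) (qRot μ qJ) (qRot μ qK) f := by
  ext1 p
  rw [lDc, ghrDeriv, ghrSum, inv_four_mul_eq_smul]

theorem lD_eq_ghrDeriv (f : ℍ[ℝ] → ℍ[ℝ]) (μ : ℍ[ℝ]) :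
    lD f μ = ghrDeriv (-qRot μ qI) (-qRot μ qJ) (-qRot μ qK) f := by
  ext1 p
  rw [lD, ghrDeriv, ghrSum, inv_four_mul_eq_smul]
  simp only [mul_neg, sub_eq_add_neg]

theorem fderiv_ghrDeriv {f : ℍ[ℝ] → ℍ[ℝ]} {q : ℍ[ℝ]}
    (hf : DifferentiableAt ℝ (fderiv ℝ f) q) (a b c : ℍ[ℝ]) :
    ⇑(fderiv ℝ (ghrDeriv a b c f) q)
      = fun w => (4⁻¹ : ℝ) • ghrSum a b c (fderiv ℝ (fderiv ℝ f) q w) := by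
  have hdir (v : ℍ[ℝ]) := (ContinuousLinearMap.apply ℝ ℍ[ℝ] v).hasFDerivAt.comp q hf.hasFDerivAt
  have h : HasFDerivAt (ghrDeriv a b c f) _ q :=
    ((((hdir 1).add ((hdir qI).mul_const' a)).add ((hdir qJ).mul_const' b)).add
      ((hdir qK).mul_const' c)).const_smul (4⁻¹ : ℝ)
  ext1 w
  rw [h.fderiv]
  simp [ghrSum]

theorem ghrSum_neg_ghrSum {a b c : ℍ[ℝ]} (h : IsCliffordTriple a b c)
    (S : ℍ[ℝ] →L[ℝ] ℍ[ℝ] →L[ℝ] ℍ[ℝ]) (hS : ∀ v w, S v w = S w v) :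
    ghrSum (-a) (-b) (-c) (fun w => ghrSum a b c (S w))
      = S 1 1 + S qI qI + S qJ qJ + S qK qK := by
  simp only [ghrSum, hS qI 1, hS qJ 1, hS qK 1, hS qJ qI, hS qK qI, hS qK qJ, add_mul, mul_neg,
    mul_assoc, h.a_mul_a, h.b_mul_b, h.c_mul_c, h.b_mul_a, h.c_mul_b, h.a_mul_c, mul_one]
  abel

theorem sixteen_mul_ghrDeriv_neg_ghrDeriv {a b c : ℍ[ℝ]} (h : IsCliffordTriple a b c)
    {f : ℍ[ℝ] → ℍ[ℝ]} {q : ℍ[ℝ]} (hf : ContDiffAt ℝ 2 f q) :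
    (16 : ℍ[ℝ]) * ghrDeriv (-a) (-b) (-c) (ghrDeriv a b c f) q
      = fderiv ℝ (fun p => fderiv ℝ f p 1) q 1
        + fderiv ℝ (fun p => fderiv ℝ f p qI) q qI
        + fderiv ℝ (fun p => fderiv ℝ f p qJ) q qJ
        + fderiv ℝ (fun p => fderiv ℝ f p qK) q qK := by
  have hF : DifferentiableAt ℝ (fderiv ℝ f) q :=
    (hf.fderiv_right (m := 1) (by norm_num)).differentiableAt one_ne_zero
  have hS := hf.isSymmSndFDerivAt (by simp [minSmoothness_of_isRCLikeNormedField])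
  have h16 : (16 : ℍ[ℝ]) * algebraMap ℝ ℍ[ℝ] (4⁻¹ * 4⁻¹) = 1 := by
    rw [← map_ofNat (algebraMap ℝ ℍ[ℝ]) 16, ← map_mul]
    norm_num
  rw [ghrDeriv, fderiv_ghrDeriv hF, ghrSum_smul, ghrSum_neg_ghrSum h _ hS, smul_smul,
    Algebra.smul_def, ← mul_assoc, h16, one_mul]
  simp only [fderiv_fderiv_apply hF]

theorem second_order_GHR_laplacian
    (f : ℍ[ℝ] → ℍ[ℝ]) (U : Set ℍ[ℝ]) (hU : IsOpen U) (q : ℍ[ℝ]) (hq : q ∈ U)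
    (hf : ContDiffOn ℝ 2 f U) (μ : ℍ[ℝ]) (hμ : μ ≠ 0) :
    (16 : ℍ[ℝ]) * lD (fun p => lDc f μ p) μ q
      = fderiv ℝ (fun p => fderiv ℝ f p 1) q 1
        + fderiv ℝ (fun p => fderiv ℝ f p qI) q qI
        + fderiv ℝ (fun p => fderiv ℝ f p qJ) q qJ
        + fderiv ℝ (fun p => fderiv ℝ f p qK) q qK ∧
    (16 : ℍ[ℝ]) * lDc (fun p => lD f μ p) μ q
      = fderiv ℝ (fun p => fderiv ℝ f p 1) q 1
        + fderiv ℝ (fun p => fderiv ℝ f p qI) q qI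
        + fderiv ℝ (fun p => fderiv ℝ f p qJ) q qJ
        + fderiv ℝ (fun p => fderiv ℝ f p qK) q qK := by
  have hfq : ContDiffAt ℝ 2 f q := hf.contDiffAt (hU.mem_nhds hq)
  have hrot := isCliffordTriple_qRot hμ
  refine ⟨?_, ?_⟩
  · rw [lDc_eq_ghrDeriv, lD_eq_ghrDeriv]
    exact sixteen_mul_ghrDeriv_neg_ghrDeriv hrot hfq
  · rw [lD_eq_ghrDeriv, lDc_eq_ghrDeriv]
    simpa only [neg_neg] using sixteen_mul_ghrDeriv_neg_ghrDeriv hrot.neg hfq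

end
end

section
/- Let f : ℍ → ℍ be real-(Fréchet-)differentiable at q ∈ ℍ and let μ ∈ ℍ be nonzero. Then the right and left GHR derivatives are related by ∂ᵣf/∂q^μ(q) = ((∂f*/∂q^{μ*})(q))* and ∂ᵣf/∂q^{μ*}(q) = ((∂f*/∂q^μ)(q))*, where f* denotes the function p ↦ (f(p))*. In particular, if f is real-valued (f(p) equals the embedding of its real part for all p), then ∂ᵣf/∂q^μ(q) = ∂f/∂q^μ(q) and ∂ᵣf/∂q^{μ*}(q) = ∂f/∂q^{μ*}(q). -/
open Quaternion Filter Topology Asymptotics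

noncomputable section

instance : StarModule ℝ ℍ[ℝ] := ⟨fun r a => by ext <;> simp⟩

instance : ContinuousStar ℍ[ℝ] := ⟨by
  have h : (star : ℍ[ℝ] → ℍ[ℝ]) = fun a : ℍ[ℝ] => ((2 * a.re : ℝ) : ℍ[ℝ]) - a := by
    funext a; rw [Quaternion.star_eq_two_re_sub]
  rw [h]
  exact ((Quaternion.continuous_coe.comp (continuous_const.mul Quaternion.continuous_re)).sub
    continuous_id)⟩

lemma coe4inv_comm (a : ℍ[ℝ]) : a * (4 : ℍ[ℝ])⁻¹ = (4 : ℍ[ℝ])⁻¹ * a := by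
  have h4 : (4 : ℍ[ℝ]) = ((4 : ℝ) : ℍ[ℝ]) := by norm_cast
  rw [h4, ← Quaternion.coe_inv, Quaternion.coe_commutes]

lemma re_mul_comm (a b : ℍ[ℝ]) : (a * b).re = (b * a).re := by
  simp [Quaternion.re_mul]; ring

lemma star_qRot {μ : ℍ[ℝ]} (hμ : μ ≠ 0) {x : ℍ[ℝ]} (hx : x.re = 0) :
    star (qRot μ x) = -qRot μ x := by
  rw [Quaternion.star_eq_neg]
  have : (qRot μ x).re = x.re := by
    rw [qRot, re_mul_comm, ← mul_assoc, inv_mul_cancel₀ hμ, one_mul]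
  rw [this, hx]

theorem right_left_GHR_relation
    (f : ℍ[ℝ] → ℍ[ℝ]) (q μ : ℍ[ℝ]) (hf : DifferentiableAt ℝ f q) (hμ : μ ≠ 0) :
    (rD f μ q = star (lDc (fun p => star (f p)) μ q) ∧
      rDc f μ q = star (lD (fun p => star (f p)) μ q)) ∧
    ((∀ p : ℍ[ℝ], f p = (((f p).re : ℝ) : ℍ[ℝ])) →
      rD f μ q = lD f μ q ∧ rDc f μ q = lDc f μ q) := by
  have hD : ∀ v : ℍ[ℝ], fderiv ℝ (fun p => star (f p)) q v = star (fderiv ℝ f q v) := by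
    intro v; rw [fderiv_star]; rfl
  have hI : (qI : ℍ[ℝ]).re = 0 := rfl
  have hJ : (qJ : ℍ[ℝ]).re = 0 := rfl
  have hK : (qK : ℍ[ℝ]).re = 0 := rfl
  have h4 : star ((4 : ℍ[ℝ])⁻¹) = (4 : ℍ[ℝ])⁻¹ := by
    rw [star_inv₀]; norm_num
  constructor
  · constructor
    · rw [rD, lDc, star_mul, h4, star_add, star_add, star_add, star_mul, star_mul, star_mul,
        hD, hD, hD, hD, star_star, star_star, star_star, star_star,
        star_qRot hμ hI, star_qRot hμ hJ, star_qRot hμ hK, coe4inv_comm]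
      noncomm_ring
    · rw [rDc, lD, star_mul, h4, star_sub, star_sub, star_sub, star_mul, star_mul, star_mul,
        hD, hD, hD, hD, star_star, star_star, star_star, star_star,
        star_qRot hμ hI, star_qRot hμ hJ, star_qRot hμ hK, coe4inv_comm]
      noncomm_ring
  · intro hreal
    have hfix : (fun p => star (f p)) = f := by
      funext p
      rw [hreal p, Quaternion.star_coe]
    have hDr : ∀ v : ℍ[ℝ], fderiv ℝ f q v = ((fderiv ℝ f q v).re : ℍ[ℝ]) := by
      intro v
      have := hD v
      rw [hfix] at this
      exact ((Quaternion.star_eq_self).mp this.symm)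
    have hcomm : ∀ v x : ℍ[ℝ], qRot μ x * fderiv ℝ f q v = fderiv ℝ f q v * qRot μ x := by
      intro v x
      rw [hDr v, ← Quaternion.coe_commutes]
    constructor
    · rw [rD, lD, hcomm, hcomm, hcomm]
    · rw [rDc, lDc, hcomm, hcomm, hcomm]

end
end
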